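/- arXiv:2408.16066 — 3 statements merged into one kernel-verified Lean document; each statement's English description precedes it below -/
import Mathlib

section
/- The k-numerical range W_k(A) is a singleton {ξ} if and only if A = (ξ/k) I. -/
open Matrix

/-- `P` is an orthogonal projection of rank `k`. -/
def IsProjOfRank {m : Type*} [Fintype m] [DecidableEq m]
    (P : Matrix m m ℂ) (k : ℕ) : Prop :=
  P * P = P ∧ Pᴴ = P ∧ P.rank = k

/-- The `k`-numerical range `W_k(A) = { tr (A P) : P an orthogonal projection of rank k }`. -/
def WK {m : Type*} [Fintype m] [DecidableEq m] (k : ℕ) (A : Matrix m m ℂ) : Set ℂ :=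
  {z | ∃ P : Matrix m m ℂ, IsProjOfRank P k ∧ z = (A * P).trace}

/-- The `k`-numerical radius `w_k(A) = max { |tr (A P)| : P a rank-k orthogonal projection }`. -/
noncomputable def wk {m : Type*} [Fintype m] [DecidableEq m] (k : ℕ) (A : Matrix m m ℂ) : ℝ :=
  sSup {r : ℝ | ∃ P : Matrix m m ℂ, IsProjOfRank P k ∧ r = ‖(A * P).trace‖}

/-- `A` and `B` are parallel with respect to the `k`-numerical radius. -/
noncomputable def ParallelWk {m : Type*} [Fintype m] [DecidableEq m]
    (k : ℕ) (A B : Matrix m m ℂ) : Prop :=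
  ∃ μ : ℂ, ‖μ‖ = 1 ∧ wk k (A + μ • B) = wk k A + wk k B

/-- Sum of the `k` largest eigenvalues of a Hermitian matrix (`0` if not Hermitian). -/
noncomputable def sumKLargest {m : Type*} [Fintype m] [DecidableEq m]
    (k : ℕ) (A : Matrix m m ℂ) : ℝ :=
  if h : A.IsHermitian then
    sSup {r : ℝ | ∃ s : Finset m, s.card = k ∧ r = ∑ i ∈ s, h.eigenvalues i}
  else 0

/-- Sum of the `k` smallest eigenvalues of a Hermitian matrix (`0` if not Hermitian). -/
noncomputable def sumKSmallest {m : Type*} [Fintype m] [DecidableEq m]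
    (k : ℕ) (A : Matrix m m ℂ) : ℝ :=
  if h : A.IsHermitian then
    sInf {r : ℝ | ∃ s : Finset m, s.card = k ∧ r = ∑ i ∈ s, h.eigenvalues i}
  else 0

/-! If all rank-`k` projections `P` give the same `tr (A P)`, fix `i ≠ j` and the diagonal
projection `D` onto `k - 1` coordinates outside `{i, j}`. For every unit vector `v` supported on
`{i, j}`, `D + v v*` is a rank-`k` projection, so `v* A v = A i i`. Testing `v = e j`,
`(3 e i + 4 e j) / 5` and `(3 e i + 4 I e j) / 5` (a Pythagorean triple avoids square roots) gives
`A j j = A i i` and `A i j = 0`, so `A` is scalar. Conversely `tr (c P) = c k`, because the trace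
of an idempotent matrix is its rank. -/

theorem Matrix.trace_eq_rank_of_mul_self {K m : Type*} [Field K] [Fintype m] [DecidableEq m]
    {P : Matrix m m K} (hP : P * P = P) : P.trace = P.rank := by
  have h : IsIdempotentElem P.mulVecLin := by
    rw [IsIdempotentElem, Module.End.mul_eq_comp, ← Matrix.mulVecLin_mul, hP]
  rw [Matrix.rank, ← (LinearMap.IsIdempotentElem.isProj_range _ h).trace,
    ← Matrix.trace_toLin'_eq]
  rfl

theorem Matrix.trace_mul_vecMulVec_star {R m : Type*} [CommSemiring R] [StarRing R] [Fintype m]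
    (A : Matrix m m R) (v : m → R) :
    (A * vecMulVec v (star v)).trace = star v ⬝ᵥ A *ᵥ v := by
  rw [mul_vecMulVec, trace_vecMulVec, dotProduct_comm]

theorem Matrix.star_add_single_dotProduct_mulVec {R m : Type*} [CommSemiring R] [StarRing R]
    [Fintype m] [DecidableEq m] (A : Matrix m m R) (i j : m) (a b : R) :
    star (Pi.single i a + Pi.single j b) ⬝ᵥ A *ᵥ (Pi.single i a + Pi.single j b) =
      star a * a * A i i + star a * b * A i j + star b * a * A j i + star b * b * A j j := by
  simp only [star_add, ← Pi.single_star, add_dotProduct, single_dotProduct, mulVec_add,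
    Pi.add_apply, mulVec_single, Pi.smul_apply, col_apply, MulOpposite.smul_eq_mul_unop,
    MulOpposite.unop_op]
  ring

section

variable {m : Type*} [Fintype m] [DecidableEq m]

namespace IsProjOfRank

variable {P Q : Matrix m m ℂ} {k l : ℕ}

theorem trace_eq (hP : IsProjOfRank P k) : P.trace = k := by
  rw [trace_eq_rank_of_mul_self hP.1, hP.2.2]

theorem of_trace_eq (hPP : P * P = P) (hP : Pᴴ = P) (ht : P.trace = k) : IsProjOfRank P k :=
  ⟨hPP, hP, by exact_mod_cast (trace_eq_rank_of_mul_self hPP).symm.trans ht⟩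

theorem add (hP : IsProjOfRank P k) (hQ : IsProjOfRank Q l) (hPQ : P * Q = 0) :
    IsProjOfRank (P + Q) (k + l) := by
  have hQP : Q * P = 0 := by
    rw [← hP.2.1, ← hQ.2.1, ← conjTranspose_mul, hPQ, conjTranspose_zero]
  refine of_trace_eq ?_ ?_ ?_
  · rw [add_mul, mul_add, mul_add, hP.1, hQ.1, hPQ, hQP, add_zero, zero_add]
  · rw [conjTranspose_add, hP.2.1, hQ.2.1]
  · rw [trace_add, hP.trace_eq, hQ.trace_eq, Nat.cast_add]

end IsProjOfRank

theorem isProjOfRank_diagonal_indicator (s : Finset m) :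
    IsProjOfRank (diagonal fun i => if i ∈ s then (1 : ℂ) else 0) s.card := by
  refine .of_trace_eq ?_ ?_ ?_
  · rw [diagonal_mul_diagonal]
    congr 1; ext i; by_cases hi : i ∈ s <;> simp [hi]
  · rw [diagonal_conjTranspose]
    congr 1; ext i; by_cases hi : i ∈ s <;> simp [hi]
  · simp [trace_diagonal, Finset.sum_ite_mem]

theorem isProjOfRank_vecMulVec {v : m → ℂ} (hv : star v ⬝ᵥ v = 1) :
    IsProjOfRank (vecMulVec v (star v)) 1 := by
  refine .of_trace_eq ?_ ?_ ?_
  · rw [vecMulVec_mul_vecMulVec, hv, one_smul]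
  · rw [conjTranspose_vecMulVec, star_star]
  · rw [trace_vecMulVec, dotProduct_comm, hv, Nat.cast_one]

theorem WK_smul_one {k : ℕ} (hk : k ≤ Fintype.card m) (c : ℂ) :
    WK k (c • (1 : Matrix m m ℂ)) = {c * k} := by
  ext z
  simp only [WK, Set.mem_ofPred_eq, Set.mem_singleton_iff, smul_mul_assoc, one_mul, trace_smul,
    smul_eq_mul]
  constructor
  · rintro ⟨P, hP, rfl⟩
    rw [hP.trace_eq]
  · rintro rfl
    obtain ⟨s, -, rfl⟩ := Finset.exists_subset_card_eq (s := Finset.univ) hk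
    have hP := isProjOfRank_diagonal_indicator s
    exact ⟨_, hP, by rw [hP.trace_eq]⟩

theorem Matrix.diagonal_indicator_mul_vecMulVec {R : Type*} [Semiring R] {s : Finset m}
    {v : m → R} (hv : ∀ l ∈ s, v l = 0) (w : m → R) :
    (diagonal fun i => if i ∈ s then (1 : R) else 0) * vecMulVec v w = 0 := by
  have hDv : (diagonal fun i => if i ∈ s then (1 : R) else 0) *ᵥ v = 0 := by
    ext l
    by_cases hl : l ∈ s <;> simp [mulVec_diagonal, hl, hv]
  rw [mul_vecMulVec, hDv, zero_vecMulVec]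

theorem star_dotProduct_mulVec_eq_of_subsingleton_WK {A : Matrix m m ℂ} {k : ℕ}
    (hA : (WK k A).Subsingleton) (hk : 1 ≤ k) (hkn : k < Fintype.card m) {i j : m} (hij : i ≠ j)
    {v : m → ℂ} (hv : star v ⬝ᵥ v = 1) (hsupp : ∀ l, l ≠ i → l ≠ j → v l = 0) :
    star v ⬝ᵥ A *ᵥ v = A i i := by
  obtain ⟨T, hT, hTcard⟩ := Finset.exists_subset_card_eq (s := Finset.univ \ {i, j}) (n := k - 1)
    (by rw [Finset.card_sdiff_of_subset (Finset.subset_univ _), Finset.card_univ,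
      Finset.card_pair hij]; omega)
  have hTij : ∀ l ∈ T, l ≠ i ∧ l ≠ j := fun l hl => by simpa using hT hl
  set D : Matrix m m ℂ := diagonal fun l => if l ∈ T then 1 else 0
  have hmem : ∀ w : m → ℂ, star w ⬝ᵥ w = 1 → (∀ l ∈ T, w l = 0) →
      (A * D).trace + star w ⬝ᵥ A *ᵥ w ∈ WK k A := by
    intro w hw hwT
    refine ⟨D + vecMulVec w (star w), ?_, ?_⟩
    · have := (isProjOfRank_diagonal_indicator T).add (isProjOfRank_vecMulVec hw)
        (diagonal_indicator_mul_vecMulVec hwT _)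
      rwa [hTcard, Nat.sub_add_cancel hk] at this
    · rw [mul_add, trace_add, trace_mul_vecMulVec_star]
  have hvT := hmem v hv fun l hl => hsupp l (hTij l hl).1 (hTij l hl).2
  have hiT := hmem (Pi.single i 1) (by simp) fun l hl => by simp [(hTij l hl).1]
  simpa using add_left_cancel (hA hvT hiT)

theorem Matrix.diag_eq_and_eq_zero_of_quadForm_pair {A : Matrix m m ℂ} {i j : m}
    (h : ∀ a b : ℂ, star a * a + star b * b = 1 →
      star (Pi.single i a + Pi.single j b) ⬝ᵥ A *ᵥ (Pi.single i a + Pi.single j b) = A i i) :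
    A j j = A i i ∧ A i j = 0 := by
  simp_rw [star_add_single_dotProduct_mulVec] at h
  have h0 := h 0 1 (by simp)
  have h1 := h (3 / 5) (4 / 5) (by norm_num)
  have h2 := h (3 / 5) (4 / 5 * Complex.I) (by
    simp only [star_div₀, star_ofNat, star_mul', RCLike.star_def, Complex.conj_I]
    linear_combination (-16 / 25 : ℂ) * Complex.I_sq)
  simp only [star_zero, star_one, star_div₀, star_ofNat, star_mul', RCLike.star_def,
    Complex.conj_I, mul_zero, zero_mul, mul_one, one_mul, add_zero, zero_add] at h0 h1 h2
  refine ⟨h0, ?_⟩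
  linear_combination (25 / 24) * (h1 - 16 / 25 * h0) - (25 / 24) * Complex.I * (h2 - 16 / 25 * h0)
    - (2 / 3) * Complex.I * A j j * Complex.I_sq + (1 / 2) * (A i j - A j i) * Complex.I_sq

theorem exists_eq_smul_one_of_subsingleton_WK {A : Matrix m m ℂ} {k : ℕ}
    (hA : (WK k A).Subsingleton) (hk : 1 ≤ k) (hkn : k < Fintype.card m) :
    ∃ d : ℂ, A = d • 1 := by
  have hpair : ∀ i j, i ≠ j → A j j = A i i ∧ A i j = 0 := fun i j hij =>
    diag_eq_and_eq_zero_of_quadForm_pair fun a b hab =>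
      star_dotProduct_mulVec_eq_of_subsingleton_WK hA hk hkn hij
        (by simpa [← Pi.single_star, hij, hij.symm] using hab)
        fun l hli hlj => by simp [hli, hlj]
  obtain ⟨i₀⟩ : Nonempty m := Fintype.card_pos_iff.mp (by omega)
  refine ⟨A i₀ i₀, ?_⟩
  ext i j
  rcases eq_or_ne i j with rfl | hij
  · rcases eq_or_ne i₀ i with rfl | hi
    · simp
    · simp [(hpair _ _ hi).1]
  · simp [one_apply_ne hij, (hpair _ _ hij).2]

end

/-- `W_k(A) = {ξ}` if and only if `A = (ξ/k) I`. -/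
theorem stmt_3 (n k : ℕ) (hk : 1 ≤ k) (hkn : k < n)
    (A : Matrix (Fin n) (Fin n) ℂ) (ξ : ℂ) :
    WK k A = {ξ} ↔ A = (ξ / (k : ℂ)) • (1 : Matrix (Fin n) (Fin n) ℂ) := by
  have hk0 : (k : ℂ) ≠ 0 := by exact_mod_cast (by omega : k ≠ 0)
  have hkn' : k ≤ Fintype.card (Fin n) := by simp; omega
  constructor
  · intro h
    obtain ⟨d, rfl⟩ := exists_eq_smul_one_of_subsingleton_WK (h ▸ Set.subsingleton_singleton) hk
      (by simpa using hkn)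
    rw [WK_smul_one hkn', Set.singleton_eq_singleton_iff] at h
    rw [← h, mul_div_cancel_right₀ _ hk0]
  · rintro rfl
    rw [WK_smul_one hkn', div_mul_cancel₀ _ hk0]
end

section
/- Let P, Q be rank-k orthogonal projections in M_n(ℂ) and θ₁, θ₂ ∈ ℝ. Then span_ℝ(e^{iθ₁}S(P)) = span_ℝ(e^{iθ₂}S(Q)) if and only if P = Q and θ₁ ≡ θ₂ (mod π). -/
open Matrix

/-!
Every element of `e^{iθ} S(P)` has `e^{-iθ} tr(· P)` real, hence so does its real span.
Applied to the elements `Q + c (1 - Q)` (`‖c‖ ≤ 1`) of `S(Q)`, equality of the spans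
forces `tr((1 - Q) P) = 0`, hence `P = Q` since both have rank `k`; then `Q ∈ S(Q)` with
`tr(Q Q) = k > 0` forces `sin (θ₂ - θ₁) = 0`. Conversely, `e^{iθ}` only changes sign when
`θ` moves by a multiple of `π`.
-/

open scoped ComplexOrder

namespace Matrix

variable {m : Type*} [Fintype m]

theorem trace_eq_rank_of_isIdempotentElem [DecidableEq m] {K : Type*} [Field K]
    {P : Matrix m m K} (hP : IsIdempotentElem P) : P.trace = P.rank := by
  have h : IsIdempotentElem (toLin' P) := hP.map toLinAlgEquiv'
  rw [← trace_toLin'_eq, (LinearMap.IsIdempotentElem.isProj_range _ h).trace, rank]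
  rfl

variable {𝕜 : Type*} [RCLike 𝕜] {E F : Matrix m m 𝕜}

theorem trace_mul_eq_trace_conjTranspose_mul_self (hE : IsStarProjection E)
    (hF : IsStarProjection F) : (E * F).trace = ((E * F)ᴴ * (E * F)).trace := by
  have hEs : Eᴴ = E := hE.isSelfAdjoint
  have hFs : Fᴴ = F := hF.isSelfAdjoint
  have hEF : (E * F)ᴴ * (E * F) = F * E * F := by
    rw [conjTranspose_mul, hEs, hFs, Matrix.mul_assoc, ← Matrix.mul_assoc E,
      hE.isIdempotentElem.eq, Matrix.mul_assoc]
  rw [hEF, trace_mul_cycle, hF.isIdempotentElem.eq, trace_mul_comm]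

theorem trace_mul_nonneg_of_isStarProjection (hE : IsStarProjection E)
    (hF : IsStarProjection F) : 0 ≤ (E * F).trace := by
  rw [trace_mul_eq_trace_conjTranspose_mul_self hE hF]
  exact (posSemidef_conjTranspose_mul_self _).trace_nonneg

theorem mul_eq_zero_of_trace_mul_eq_zero (hE : IsStarProjection E) (hF : IsStarProjection F)
    (h : (E * F).trace = 0) : E * F = 0 := by
  rwa [trace_mul_eq_trace_conjTranspose_mul_self hE hF,
    (posSemidef_conjTranspose_mul_self _).trace_eq_zero_iff, conjTranspose_mul_self_eq_zero] at h

theorem eq_of_trace_one_sub_mul_eq_zero [DecidableEq m] (hE : IsStarProjection E)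
    (hF : IsStarProjection F) (htr : E.trace = F.trace) (h : ((1 - F) * E).trace = 0) :
    E = F := by
  have hFE : F * E = E := by
    have := mul_eq_zero_of_trace_mul_eq_zero hF.one_sub hE h
    rwa [sub_mul, one_mul, sub_eq_zero, eq_comm] at this
  have hEF : E * F = F := by
    refine (sub_eq_zero.1 ?_).symm
    rw [← one_sub_mul]
    refine mul_eq_zero_of_trace_mul_eq_zero hE.one_sub hF ?_
    rw [sub_mul, one_mul, trace_sub, ← htr, trace_mul_comm, ← h, sub_mul, one_mul, trace_sub]
  have hEs : Eᴴ = E := hE.isSelfAdjoint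
  have hFs : Fᴴ = F := hF.isSelfAdjoint
  calc E = (F * E)ᴴ := by rw [hFE, hEs]
    _ = E * F := by rw [conjTranspose_mul, hEs, hFs]
    _ = F := hEF

end Matrix

section WkAttaining

variable {m : Type*} [Fintype m] [DecidableEq m] {k : ℕ}

theorem IsProjOfRank.isStarProjection {P : Matrix m m ℂ} (hP : IsProjOfRank P k) :
    IsStarProjection P :=
  ⟨hP.1, hP.2.1⟩

theorem IsProjOfRank.trace_eq_s13 {P : Matrix m m ℂ} (hP : IsProjOfRank P k) : P.trace = k := by
  rw [trace_eq_rank_of_isIdempotentElem hP.1, hP.2.2]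

-- the set `S(P)` of the statement
def wkAttainingSet (k : ℕ) (P : Matrix m m ℂ) : Set (Matrix m m ℂ) :=
  {B | (B * P).trace = wk k B}

theorem mem_wkAttainingSet_of_forall_norm_le {B Q : Matrix m m ℂ} (hQ : IsProjOfRank Q k)
    (hnonneg : 0 ≤ (B * Q).trace)
    (hmax : ∀ P, IsProjOfRank P k → ‖(B * P).trace‖ ≤ ‖(B * Q).trace‖) :
    B ∈ wkAttainingSet k Q := by
  have hwk : wk k B = ‖(B * Q).trace‖ :=
    IsGreatest.csSup_eq ⟨⟨Q, hQ, rfl⟩, by rintro _ ⟨P, hP, rfl⟩; exact hmax P hP⟩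
  rw [wkAttainingSet, Set.mem_ofPred_eq, hwk]
  exact Complex.eq_coe_norm_of_nonneg hnonneg

theorem add_smul_one_sub_mem_wkAttainingSet {Q : Matrix m m ℂ} (hQ : IsProjOfRank Q k) {c : ℂ}
    (hc : ‖c‖ ≤ 1) : Q + c • (1 - Q) ∈ wkAttainingSet k Q := by
  have hQs := hQ.isStarProjection
  have hBQ : (Q + c • (1 - Q)) * Q = Q := by
    rw [add_mul, smul_mul, hQs.one_sub_mul_self, smul_zero, add_zero, hQ.1]
  refine mem_wkAttainingSet_of_forall_norm_le hQ ?_ fun P hP => ?_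
  · rw [hBQ, hQ.trace_eq_s13]
    exact Nat.cast_nonneg k
  have hx := trace_mul_nonneg_of_isStarProjection hQs hP.isStarProjection
  have hy := trace_mul_nonneg_of_isStarProjection hQs.one_sub hP.isStarProjection
  have hsum : (Q * P).trace + ((1 - Q) * P).trace = Q.trace := by
    rw [← trace_add, ← add_mul, add_sub_cancel, one_mul, hP.trace_eq_s13, hQ.trace_eq_s13]
  have hnorm : ‖(Q * P).trace‖ + ‖((1 - Q) * P).trace‖ = ‖Q.trace‖ := by
    apply Complex.ofReal_injective
    push_cast
    rw [← hsum, Complex.norm_of_nonneg' hx, Complex.norm_of_nonneg' hy,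
      Complex.norm_of_nonneg' (add_nonneg hx hy)]
  rw [hBQ, add_mul, smul_mul, trace_add, trace_smul, smul_eq_mul, ← hnorm]
  calc ‖(Q * P).trace + c * ((1 - Q) * P).trace‖
      ≤ ‖(Q * P).trace‖ + ‖c‖ * ‖((1 - Q) * P).trace‖ := by
        grw [norm_add_le, norm_mul]
    _ ≤ ‖(Q * P).trace‖ + ‖((1 - Q) * P).trace‖ := by
        gcongr
        exact mul_le_of_le_one_left (norm_nonneg _) hc

theorem im_exp_neg_mul_trace_eq_zero_of_mem_span {P X : Matrix m m ℂ} {θ : ℝ}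
    (hX : X ∈ Submodule.span ℝ
      ((fun B => Complex.exp (θ * Complex.I) • B) '' wkAttainingSet k P)) :
    (Complex.exp (-θ * Complex.I) * (X * P).trace).im = 0 := by
  induction hX using Submodule.span_induction with
  | mem X hX =>
    obtain ⟨B, hB, rfl⟩ := hX
    rw [smul_mul, trace_smul, smul_eq_mul, ← mul_assoc, ← Complex.exp_add, hB]
    simp
  | zero => simp
  | add X Y _ _ hX hY => rw [add_mul, trace_add, mul_add, Complex.add_im, hX, hY, add_zero]
  | smul r X _ hX =>
    rw [smul_mul, trace_smul, Complex.real_smul, mul_left_comm, Complex.im_ofReal_mul, hX,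
      mul_zero]

theorem eq_and_sin_eq_zero_of_forall_im_exp_mul_trace_eq_zero (hk : 0 < k)
    {P Q : Matrix m m ℂ} (hP : IsProjOfRank P k) (hQ : IsProjOfRank Q k) {φ : ℝ}
    (h : ∀ B ∈ wkAttainingSet k Q, (Complex.exp (φ * Complex.I) * (B * P).trace).im = 0) :
    P = Q ∧ Real.sin φ = 0 := by
  have htr (c : ℂ) :
      ((Q + c • (1 - Q)) * P).trace = (Q * P).trace + c * ((1 - Q) * P).trace := by
    rw [add_mul, trace_add, smul_mul, trace_smul, smul_eq_mul]
  have hQP : (Complex.exp (φ * Complex.I) * (Q * P).trace).im = 0 := by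
    simpa [htr] using h _ (add_smul_one_sub_mem_wkAttainingSet hQ (c := 0) (by simp))
  -- rotating the coefficient to `i e^{-iφ}` isolates `tr((1 - Q) P)` as a real part
  have hre : ((1 - Q) * P).trace.re = 0 := by
    have hc : ‖Complex.I * Complex.exp (-φ * Complex.I)‖ ≤ 1 := by
      rw [norm_mul, Complex.norm_I, one_mul, ← Complex.ofReal_neg, Complex.norm_exp_ofReal_mul_I]
    have := h _ (add_smul_one_sub_mem_wkAttainingSet hQ hc)
    rwa [htr, mul_add, Complex.add_im, hQP, zero_add, ← mul_assoc, mul_left_comm,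
      ← Complex.exp_add, neg_mul, add_neg_cancel, Complex.exp_zero, mul_one,
      Complex.I_mul_im] at this
  have hzero : ((1 - Q) * P).trace = 0 := by
    have := trace_mul_nonneg_of_isStarProjection hQ.isStarProjection.one_sub hP.isStarProjection
    exact Complex.ext hre (Complex.nonneg_iff.1 this).2.symm
  obtain rfl : P = Q := eq_of_trace_one_sub_mul_eq_zero hP.isStarProjection hQ.isStarProjection
    (by rw [hP.trace_eq_s13, hQ.trace_eq_s13]) hzero
  refine ⟨rfl, ?_⟩
  rw [hP.1, hP.trace_eq_s13, ← Complex.ofReal_natCast, Complex.im_mul_ofReal,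
    Complex.exp_ofReal_mul_I_im] at hQP
  exact (mul_eq_zero.1 hQP).resolve_right (by exact_mod_cast hk.ne')

end WkAttaining

theorem Submodule.span_image_exp_mul_I_smul_add_int_mul_pi {M : Type*} [AddCommGroup M]
    [Module ℂ M] [Module ℝ M] [IsScalarTower ℝ ℂ M] (s : Set M) (θ : ℝ) (j : ℤ) :
    span ℝ ((fun x => Complex.exp (↑(θ + j * Real.pi) * Complex.I) • x) '' s)
      = span ℝ ((fun x => Complex.exp (θ * Complex.I) • x) '' s) := by
  have hexp : Complex.exp (↑(θ + j * Real.pi) * Complex.I)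
      = ((-1 : ℝ) ^ j : ℝ) • Complex.exp (θ * Complex.I) := by
    rw [Complex.real_smul]
    push_cast
    rw [add_mul, Complex.exp_add, mul_assoc, Complex.exp_int_mul, Complex.exp_pi_mul_I, mul_comm]
  rw [hexp]
  simp_rw [smul_assoc]
  rw [← Set.image_image (fun x => ((-1 : ℝ) ^ j) • x), Set.image_smul,
    Submodule.span_smul_eq_of_isUnit _ _ (zpow_ne_zero j (by norm_num)).isUnit]

theorem stmt_13_general (n k : ℕ) (hk : 1 ≤ k)
    (P Q : Matrix (Fin n) (Fin n) ℂ) (hP : IsProjOfRank P k) (hQ : IsProjOfRank Q k)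
    (θ₁ θ₂ : ℝ) :
    Submodule.span ℝ
        ((fun B => Complex.exp (θ₁ * Complex.I) • B) ''
          {B : Matrix (Fin n) (Fin n) ℂ | (B * P).trace = (wk k B : ℂ)})
      = Submodule.span ℝ
        ((fun B => Complex.exp (θ₂ * Complex.I) • B) ''
          {B : Matrix (Fin n) (Fin n) ℂ | (B * Q).trace = (wk k B : ℂ)})
    ↔ (P = Q ∧ ∃ m : ℤ, θ₁ = θ₂ + m * Real.pi) := by
  constructor
  · intro h
    have hrot : ∀ B ∈ wkAttainingSet k Q,
        (Complex.exp (↑(θ₂ - θ₁) * Complex.I) * (B * P).trace).im = 0 := by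
      intro B hB
      have hmem : Complex.exp (θ₂ * Complex.I) • B ∈ Submodule.span ℝ
          ((fun B => Complex.exp (θ₁ * Complex.I) • B) '' wkAttainingSet k P) := by
        rw [wkAttainingSet, h]
        exact Submodule.subset_span ⟨B, hB, rfl⟩
      replace hmem := im_exp_neg_mul_trace_eq_zero_of_mem_span hmem
      rwa [smul_mul, trace_smul, smul_eq_mul, ← mul_assoc, ← Complex.exp_add, ← add_mul,
        neg_add_eq_sub, ← Complex.ofReal_sub] at hmem
    obtain ⟨rfl, hsin⟩ := eq_and_sin_eq_zero_of_forall_im_exp_mul_trace_eq_zero hk hP hQ hrot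
    obtain ⟨j, hj⟩ := Real.sin_eq_zero_iff.1 hsin
    exact ⟨rfl, -j, by push_cast; linarith⟩
  · rintro ⟨rfl, j, rfl⟩
    exact Submodule.span_image_exp_mul_I_smul_add_int_mul_pi _ _ _

/-- `span_ℝ(e^{iθ₁} S(P)) = span_ℝ(e^{iθ₂} S(Q))` iff `P = Q` and
`θ₁ ≡ θ₂ (mod π)`. -/
theorem stmt_13 (n k : ℕ) (hk : 1 ≤ k) (hkn : k < n)
    (P Q : Matrix (Fin n) (Fin n) ℂ) (hP : IsProjOfRank P k) (hQ : IsProjOfRank Q k)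
    (θ₁ θ₂ : ℝ) :
    Submodule.span ℝ
        ((fun B => Complex.exp (θ₁ * Complex.I) • B) ''
          {B : Matrix (Fin n) (Fin n) ℂ | (B * P).trace = (wk k B : ℂ)})
      = Submodule.span ℝ
        ((fun B => Complex.exp (θ₂ * Complex.I) • B) ''
          {B : Matrix (Fin n) (Fin n) ℂ | (B * Q).trace = (wk k B : ℂ)})
    ↔ (P = Q ∧ ∃ m : ℤ, θ₁ = θ₂ + m * Real.pi) :=
  stmt_13_general n k hk P Q hP hQ θ₁ θ₂
end

section
/- Two Hermitian matrices A, B ∈ H_n are parallel with respect to the k-numerical radius if and only if there exists a rank-k orthogonal projection P with |tr(AP)| = w_k(A) and |tr(BP)| = w_k(B). -/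
open Matrix

/- `w_k(A)` is a maximum over the compact set of rank-`k` orthogonal projections, and
`P ↦ tr (A P)` is linear. If `w_k(A + εB) = w_k(A) + w_k(B)`, a projection attaining `w_k(A + εB)`
must, by the triangle inequality, attain both `w_k(A)` and `w_k(B)`. Conversely, for Hermitian
`A, B` and a common maximizer `P` the traces `tr (A P)`, `tr (B P)` are real, so a sign `ε`
aligning them gives `|tr ((A + εB) P)| = w_k(A) + w_k(B)`. -/

theorem Matrix.trace_eq_rank_of_isIdempotentElem_s14 {m K : Type*} [Fintype m] [DecidableEq m]
    [Field K] {P : Matrix m m K} (hP : IsIdempotentElem P) : P.trace = P.rank := by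
  have hlin : IsIdempotentElem (Matrix.toLin' P) := hP.map Matrix.toLinAlgEquiv'
  rw [← Matrix.trace_toLin'_eq, (LinearMap.IsIdempotentElem.isProj_range _ hlin).trace]
  rfl

theorem IsStarProjection.norm_apply_le_one {m 𝕜 : Type*} [Fintype m] [RCLike 𝕜]
    {P : Matrix m m 𝕜} (hP : IsStarProjection P) (i j : m) : ‖P i j‖ ≤ 1 := by
  have hdiag : ∀ j, ((∑ l, ‖P l j‖ ^ 2 : ℝ) : 𝕜) = P j j := fun j => by
    have hP' : Pᴴ * P = P := by rw [show Pᴴ = P from hP.isSelfAdjoint, hP.isIdempotentElem.eq]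
    conv_rhs => rw [← hP']
    simp [mul_apply, RCLike.conj_mul]
  have hsq : ∀ i j, ‖P i j‖ ^ 2 ≤ ‖P j j‖ := fun i j => by
    rw [← hdiag, RCLike.norm_ofReal, abs_of_nonneg (by positivity)]
    exact Finset.single_le_sum (fun l _ => sq_nonneg ‖P l j‖) (Finset.mem_univ i)
  have hjj : ‖P j j‖ ≤ 1 := by nlinarith [hsq j j, norm_nonneg (P j j)]
  nlinarith [hsq i j, norm_nonneg (P i j)]

theorem Matrix.IsHermitian.im_trace_mul_eq_zero {m : Type*} [Fintype m] {A P : Matrix m m ℂ}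
    (hA : A.IsHermitian) (hP : P.IsHermitian) : (A * P).trace.im = 0 := by
  rw [← Complex.conj_eq_iff_im, ← Complex.star_def, ← trace_conjTranspose, conjTranspose_mul,
    hA.eq, hP.eq, trace_mul_comm]

theorem exists_abs_add_mul_eq (r s : ℝ) :
    ∃ ε : ℝ, (ε = 1 ∨ ε = -1) ∧ |r + ε * s| = |r| + |s| := by
  rcases le_total 0 (r * s) with h | h
  · exact ⟨1, .inl rfl, by rwa [one_mul, abs_add_eq_add_abs_iff, ← mul_nonneg_iff]⟩
  · refine ⟨-1, .inr rfl, ?_⟩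
    rwa [neg_one_mul, ← abs_neg s, abs_add_eq_add_abs_iff, ← mul_nonneg_iff, mul_neg, neg_nonneg]

section ProjOfRank

variable {m : Type*} [Fintype m] [DecidableEq m]

theorem isProjOfRank_iff_trace {P : Matrix m m ℂ} {k : ℕ} :
    IsProjOfRank P k ↔ P * P = P ∧ Pᴴ = P ∧ P.trace = k := by
  refine and_congr_right fun hP => and_congr_right fun _ => ?_
  rw [Matrix.trace_eq_rank_of_isIdempotentElem_s14 hP, Nat.cast_inj]

theorem exists_isProjOfRank {k : ℕ} (hk : k ≤ Fintype.card m) :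
    ∃ P : Matrix m m ℂ, IsProjOfRank P k := by
  obtain ⟨s, -, hs⟩ := Finset.exists_subset_card_eq (s := Finset.univ) hk
  refine ⟨diagonal fun i => if i ∈ s then 1 else 0, ?_, ?_, ?_⟩
  · rw [diagonal_mul_diagonal]
    congr! 2 with i
    split_ifs <;> simp
  · rw [diagonal_conjTranspose]
    congr! 2 with i
    split_ifs with hi <;> simp [hi]
  · classical
    rw [rank_diagonal, ← hs, ← Fintype.card_coe]
    exact Fintype.card_congr (Equiv.subtypeEquivRight fun i => by simp)

theorem isCompact_setOf_isProjOfRank (k : ℕ) :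
    IsCompact {P : Matrix m m ℂ | IsProjOfRank P k} := by
  have hclosed : IsClosed {P : Matrix m m ℂ | IsProjOfRank P k} := by
    simp only [isProjOfRank_iff_trace]
    show IsClosed ({P : Matrix m m ℂ | P * P = P} ∩ ({P | Pᴴ = P} ∩ {P | P.trace = k}))
    exact (isClosed_eq (by fun_prop) (by fun_prop)).inter
      ((isClosed_eq (by fun_prop) (by fun_prop)).inter (isClosed_eq (by fun_prop) (by fun_prop)))
  refine (isCompact_univ_pi fun _ => isCompact_univ_pi fun _ =>
    isCompact_closedBall (0 : ℂ) 1).of_isClosed_subset hclosed ?_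
  rintro P ⟨hidem, hself, -⟩ i - j -
  simpa using IsStarProjection.norm_apply_le_one ⟨hidem, hself⟩ i j

theorem isGreatest_wk {k : ℕ} (hk : k ≤ Fintype.card m) (A : Matrix m m ℂ) :
    IsGreatest {r : ℝ | ∃ P : Matrix m m ℂ, IsProjOfRank P k ∧ r = ‖(A * P).trace‖}
      (wk k A) := by
  have hS : {r : ℝ | ∃ P : Matrix m m ℂ, IsProjOfRank P k ∧ r = ‖(A * P).trace‖} =
      (fun P => ‖(A * P).trace‖) '' {P | IsProjOfRank P k} := by
    ext r
    simp [eq_comm]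
  rw [wk, hS]
  obtain ⟨P, hP⟩ := exists_isProjOfRank (m := m) hk
  exact ((isCompact_setOf_isProjOfRank k).image (by fun_prop)).isGreatest_sSup ⟨_, P, hP, rfl⟩

theorem norm_trace_mul_le_wk {k : ℕ} (hk : k ≤ Fintype.card m) (A : Matrix m m ℂ)
    {P : Matrix m m ℂ} (hP : IsProjOfRank P k) : ‖(A * P).trace‖ ≤ wk k A :=
  (isGreatest_wk hk A).2 ⟨P, hP, rfl⟩

omit [DecidableEq m] in
theorem norm_trace_add_smul_mul_le (A B P : Matrix m m ℂ) (ε : ℝ) :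
    ‖((A + ε • B) * P).trace‖ ≤ ‖(A * P).trace‖ + |ε| * ‖(B * P).trace‖ := by
  rw [add_mul, trace_add, smul_mul_assoc, trace_smul]
  simpa [norm_smul] using norm_add_le (A * P).trace (ε • (B * P).trace)

theorem wk_add_smul_le {k : ℕ} (hk : k ≤ Fintype.card m) (A B : Matrix m m ℂ) (ε : ℝ) :
    wk k (A + ε • B) ≤ wk k A + |ε| * wk k B := by
  obtain ⟨P, hP, hmax⟩ := (isGreatest_wk hk (A + ε • B)).1
  rw [hmax]
  refine (norm_trace_add_smul_mul_le A B P ε).trans ?_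
  gcongr
  exacts [norm_trace_mul_le_wk hk A hP, norm_trace_mul_le_wk hk B hP]

end ProjOfRank

theorem stmt_14_general (n k : ℕ) (hkn : k < n)
    (A B : Matrix (Fin n) (Fin n) ℂ) (hA : A.IsHermitian) (hB : B.IsHermitian) :
    (∃ ε : ℝ, (ε = 1 ∨ ε = -1) ∧ wk k (A + ε • B) = wk k A + wk k B) ↔
      ∃ P : Matrix (Fin n) (Fin n) ℂ, IsProjOfRank P k ∧
        ‖(A * P).trace‖ = wk k A ∧ ‖(B * P).trace‖ = wk k B := by
  have hk : k ≤ Fintype.card (Fin n) := by simpa using hkn.le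
  have hsign {ε : ℝ} (hε : ε = 1 ∨ ε = -1) : |ε| = 1 := by rcases hε with rfl | rfl <;> simp
  constructor
  · rintro ⟨ε, hε, hpar⟩
    obtain ⟨P, hP, hmax⟩ := (isGreatest_wk hk (A + ε • B)).1
    have htri := norm_trace_add_smul_mul_le A B P ε
    have hAP := norm_trace_mul_le_wk hk A hP
    have hBP := norm_trace_mul_le_wk hk B hP
    rw [hsign hε, one_mul, ← hmax, hpar] at htri
    exact ⟨P, hP, by linarith, by linarith⟩
  · rintro ⟨P, hP, hAP, hBP⟩
    have hPh : P.IsHermitian := hP.2.1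
    obtain ⟨ε, hε, habs⟩ := exists_abs_add_mul_eq (A * P).trace.re (B * P).trace.re
    refine ⟨ε, hε, le_antisymm (by simpa [hsign hε] using wk_add_smul_le hk A B ε) ?_⟩
    calc wk k A + wk k B = |(A * P).trace.re| + |(B * P).trace.re| := by
          rw [← hAP, ← hBP, Complex.abs_re_eq_norm.2 (hA.im_trace_mul_eq_zero hPh),
            Complex.abs_re_eq_norm.2 (hB.im_trace_mul_eq_zero hPh)]
      _ = ‖((A + ε • B) * P).trace‖ := by
          rw [← habs, ← Complex.abs_re_eq_norm.2
            ((hA.add (hB.smul (IsSelfAdjoint.all ε))).im_trace_mul_eq_zero hPh)]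
          simp [add_mul, trace_add, trace_smul]
      _ ≤ wk k (A + ε • B) := norm_trace_mul_le_wk hk _ hP

/-- Hermitian `A, B` are parallel (i.e. `w_k(A + εB) = w_k(A) + w_k(B)` for
some `ε ∈ {-1, 1}`) iff there is a rank-`k` orthogonal projection `P` with
`|tr(AP)| = w_k(A)` and `|tr(BP)| = w_k(B)`. -/
theorem stmt_14 (n k : ℕ) (hk : 1 ≤ k) (hkn : k < n)
    (A B : Matrix (Fin n) (Fin n) ℂ) (hA : A.IsHermitian) (hB : B.IsHermitian) :
    (∃ ε : ℝ, (ε = 1 ∨ ε = -1) ∧ wk k (A + ε • B) = wk k A + wk k B) ↔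
      ∃ P : Matrix (Fin n) (Fin n) ℂ, IsProjOfRank P k ∧
        ‖(A * P).trace‖ = wk k A ∧ ‖(B * P).trace‖ = wk k B :=
  stmt_14_general n k hkn A B hA hB
end
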